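/- arXiv:2601.13195 — 3 statements merged into one kernel-verified Lean document; each statement's English description precedes it below -/
import Mathlib

section
/- With the segment tree structure on an array of length n = 2^s, for any fixed query range [l, r] and any layer i, the number of nodes in layer i whose parent's range intersects [l,r] but is not contained in [l,r] is at most 4; consequently the total number of distinct nodes visited by the standard recursive segment tree query for [l,r] starting from the root is O(log n) (at most 4(s+1)). -/
/-- Range `[L, R]` of node `k` in the segment tree over `[1, n]`. -/
def segRange (n : ℕ) : ℕ → ℕ × ℕ
  | 0 => (1, n)
  | 1 => (1, n)
  | (k+2) =>
    let p := segRange n ((k+2)/2)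
    let m := (p.1 + p.2) / 2
    if (k+2) % 2 = 0 then (p.1, m) else (m+1, p.2)

/-- Left endpoint of the range of node `k`. -/
def segL (n k : ℕ) : ℕ := (segRange n k).1

/-- Right endpoint of the range of node `k`. -/
def segR (n k : ℕ) : ℕ := (segRange n k).2

/-- Node k is visited by the standard recursive segment tree query for the range
`[l, r]`: the root is visited, and a node is visited when its parent is visited,
the parent range intersects `[l, r]` but is not contained in it, and the node's
own range intersects `[l, r]`. -/
def visited (n l r : ℕ) : ℕ → Bool
  | 0 => false
  | 1 => true
  | (k+2) =>
    visited n l r ((k+2)/2) &&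
    decide ((Finset.Icc (segL n ((k+2)/2)) (segR n ((k+2)/2)) ∩ Finset.Icc l r).Nonempty) &&
    decide (¬ Finset.Icc (segL n ((k+2)/2)) (segR n ((k+2)/2)) ⊆ Finset.Icc l r) &&
    decide ((Finset.Icc (segL n (k+2)) (segR n (k+2)) ∩ Finset.Icc l r).Nonempty)

lemma segRange_eq (s : ℕ) : ∀ j, j ≤ s → ∀ q, q < 2^j →
    segRange (2^s) (2^j + q) = (q * 2^(s-j) + 1, (q+1) * 2^(s-j)) := by
  intro j
  induction j with
  | zero =>
    intro _ q hq
    interval_cases q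
    simp [segRange]
  | succ j ih =>
    intro hj q hq
    have hjs : j ≤ s := by omega
    have hW : 2^(s - j) = 2 * 2^(s - (j+1)) := by
      rw [← pow_succ']
      congr 1
      omega
    set W := 2^(s-(j+1)) with hWdef
    have hpow : 2^(j+1) = 2*2^j := by rw [pow_succ]; ring
    obtain ⟨m, hm⟩ : ∃ m, 2^(j+1) + q = m + 2 :=
      ⟨2^(j+1) + q - 2, by have := Nat.one_le_two_pow (n := j+1); omega⟩
    rw [hm, segRange]
    have hdiv : (m+2)/2 = 2^j + q/2 := by omega
    have hq2 : q/2 < 2^j := by omega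
    rw [hdiv, ih hjs (q/2) hq2]
    set t := q/2 with htdef
    have hmod : (m+2) % 2 = q % 2 := by omega
    simp only [hmod, hW]
    set X := t*W with hXdef
    have hXl : t*(2*W) = 2*X := by rw [hXdef]; ring
    have hXr : (t+1)*(2*W) = 2*X + 2*W := by rw [hXdef]; ring
    rcases Nat.even_or_odd q with hev | hod
    · have hq0 : q % 2 = 0 := Nat.even_iff.mp hev
      have hqt : q = 2*t := by omega
      have hA : q * W = 2*X := by rw [hqt, hXdef]; ring
      have hB : (q+1) * W = 2*X + W := by rw [hqt, hXdef]; ring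
      simp only [hq0, if_pos, hXl, hXr, hA, hB, Prod.mk.injEq]
      constructor
      · trivial
      · omega
    · have hq1 : q % 2 = 1 := Nat.odd_iff.mp hod
      have hqt : q = 2*t + 1 := by omega
      have hA : q * W = 2*X + W := by rw [hqt, hXdef]; ring
      have hB : (q+1) * W = 2*X + 2*W := by rw [hqt, hXdef]; ring
      simp only [hq1, hXl, hXr, hA, hB, Prod.mk.injEq]
      rw [if_neg (by omega)]
      simp only [Prod.mk.injEq]
      constructor
      · omega
      · trivial

lemma contains_endpoint {L R l r : ℕ}
    (h1 : (Finset.Icc L R ∩ Finset.Icc l r).Nonempty)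
    (h2 : ¬ Finset.Icc L R ⊆ Finset.Icc l r) :
    (L ≤ l ∧ l ≤ R) ∨ (L ≤ r ∧ r ≤ R) := by
  obtain ⟨x, hx⟩ := h1
  simp only [Finset.mem_inter, Finset.mem_Icc] at hx
  rw [Finset.subset_iff] at h2
  push_neg at h2
  obtain ⟨y, hy1, hy2⟩ := h2
  simp only [Finset.mem_Icc] at hy1 hy2
  omega

lemma layer_bound (s l r i : ℕ) (h1i : 1 ≤ i) (his : i ≤ s) (hl : 1 ≤ l) (hr1 : 1 ≤ r) :
    ((Finset.Ico (2 ^ i) (2 ^ (i + 1))).filter (fun k =>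
        (Finset.Icc (segL (2^s) (k / 2)) (segR (2^s) (k / 2)) ∩ Finset.Icc l r).Nonempty ∧
        ¬ Finset.Icc (segL (2^s) (k / 2)) (segR (2^s) (k / 2)) ⊆ Finset.Icc l r)).card ≤ 4 := by
  set W := 2^(s-(i-1)) with hWdef
  have hW1 : 1 ≤ W := Nat.one_le_two_pow
  set u := (l-1)/W with hu
  set v := (r-1)/W with hv
  set a := 2^(i-1) + u with ha
  set b := 2^(i-1) + v with hb
  have hsub : ((Finset.Ico (2 ^ i) (2 ^ (i + 1))).filter (fun k =>
        (Finset.Icc (segL (2^s) (k / 2)) (segR (2^s) (k / 2)) ∩ Finset.Icc l r).Nonempty ∧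
        ¬ Finset.Icc (segL (2^s) (k / 2)) (segR (2^s) (k / 2)) ⊆ Finset.Icc l r))
      ⊆ ({2*a, 2*a+1, 2*b, 2*b+1} : Finset ℕ) := by
    intro k hk
    simp only [Finset.mem_filter, Finset.mem_Ico] at hk
    obtain ⟨⟨hk1, hk2⟩, hne, hns⟩ := hk
    have hpow1 : 2^i = 2*2^(i-1) := by rw [← pow_succ']; congr 1; omega
    have hpow2 : 2^(i+1) = 2*2^i := by rw [pow_succ]; ring
    have hp1 : 2^(i-1) ≤ k/2 := by omega
    have hp2 : k/2 < 2^i := by omega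
    set q := k/2 - 2^(i-1) with hqdef
    have hkq : k/2 = 2^(i-1) + q := by omega
    have hqlt : q < 2^(i-1) := by omega
    have hrange := segRange_eq s (i-1) (by omega) q hqlt
    have hsj : s - (i-1) = s - (i-1) := rfl
    have hL : segL (2^s) (k/2) = q*W+1 := by rw [segL, hkq, hrange]
    have hR : segR (2^s) (k/2) = (q+1)*W := by rw [segR, hkq, hrange]
    rw [hL, hR] at hne hns
    have hcase := contains_endpoint hne hns
    have hsm : Nat.succ q * W = q*W + W := by rw [Nat.succ_mul]
    have key : q = u ∨ q = v := by
      set QW := q*W with hQW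
      rcases hcase with ⟨h1, h2⟩ | ⟨h1, h2⟩
      · left
        rw [hu]
        symm
        apply Nat.div_eq_of_lt_le
        · omega
        · omega
      · right
        rw [hv]
        symm
        apply Nat.div_eq_of_lt_le
        · omega
        · omega
    simp only [Finset.mem_insert, Finset.mem_singleton]
    omega
  refine le_trans (Finset.card_le_card hsub) ?_
  refine le_trans (Finset.card_insert_le _ _) ?_
  refine le_trans (Nat.add_le_add_right (Finset.card_insert_le _ _) 1) ?_
  refine le_trans (Nat.add_le_add_right (Nat.add_le_add_right (Finset.card_insert_le _ _) 1) 1) ?_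
  have := Finset.card_singleton (2*b+1)
  omega

theorem segTree_query_visits (s n l r : ℕ) (hs : 1 ≤ s) (hn : n = 2 ^ s)
    (hl : 1 ≤ l) (hlr : l ≤ r) (hr : r ≤ n) :
    (∀ i, 1 ≤ i → i ≤ s →
      ((Finset.Ico (2 ^ i) (2 ^ (i + 1))).filter (fun k =>
          (Finset.Icc (segL n (k / 2)) (segR n (k / 2)) ∩ Finset.Icc l r).Nonempty ∧
          ¬ Finset.Icc (segL n (k / 2)) (segR n (k / 2)) ⊆ Finset.Icc l r)).card ≤ 4) ∧
    ((Finset.Ico 1 (2 * n)).filter (fun k => visited n l r k)).card ≤ 4 * (s + 1) := by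
  subst hn
  have hr1 : 1 ≤ r := le_trans hl hlr
  constructor
  · intro i h1 h2
    exact layer_bound s l r i h1 h2 hl hr1
  · have h2n : 2 * 2^s = 2^(s+1) := by rw [pow_succ]; ring
    have key : ∀ i, i ≤ s →
        ((Finset.Ico (2^i) (2^(i+1))).filter (fun k => visited (2^s) l r k)).card ≤ 4 := by
      intro i hi
      rcases Nat.eq_zero_or_pos i with rfl | hipos
      · refine le_trans (Finset.card_filter_le _ _) ?_
        simp [Nat.card_Ico]
      · have hsub2 : (Finset.Ico (2^i) (2^(i+1))).filter (fun k => visited (2^s) l r k) ⊆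
            (Finset.Ico (2 ^ i) (2 ^ (i + 1))).filter (fun k =>
              (Finset.Icc (segL (2^s) (k / 2)) (segR (2^s) (k / 2)) ∩ Finset.Icc l r).Nonempty ∧
              ¬ Finset.Icc (segL (2^s) (k / 2)) (segR (2^s) (k / 2)) ⊆ Finset.Icc l r) := by
          intro k hk
          simp only [Finset.mem_filter, Finset.mem_Ico] at hk ⊢
          obtain ⟨⟨hk1, hk2⟩, hv⟩ := hk
          have h2k : 2 ≤ k := by
            have h21 : (2:ℕ)^1 ≤ 2^i := Nat.pow_le_pow_right (by norm_num) hipos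
            simpa using le_trans h21 hk1
          obtain ⟨m, rfl⟩ : ∃ m, k = m+2 := ⟨k-2, by omega⟩
          rw [visited] at hv
          simp only [Bool.and_eq_true, decide_eq_true_eq] at hv
          exact ⟨⟨hk1, hk2⟩, hv.1.1.2, hv.1.2⟩
        exact le_trans (Finset.card_le_card hsub2) (layer_bound s l r i hipos hi hl hr1)
    have hdecomp : (Finset.Ico 1 (2*2^s)).filter (fun k => visited (2^s) l r k) ⊆
        (Finset.range (s+1)).biUnion
          (fun i => (Finset.Ico (2^i) (2^(i+1))).filter (fun k => visited (2^s) l r k)) := by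
      intro k hk
      simp only [Finset.mem_filter, Finset.mem_Ico] at hk
      obtain ⟨⟨hk1, hk2⟩, hv⟩ := hk
      have hk0 : k ≠ 0 := by omega
      set i := Nat.log 2 k with hidef
      have hle : 2^i ≤ k := Nat.pow_log_le_self 2 hk0
      have hlt : k < 2^(i+1) := Nat.lt_pow_succ_log_self (by norm_num) k
      have his : i ≤ s := by
        by_contra h
        have : 2^(s+1) ≤ 2^i := Nat.pow_le_pow_right (by norm_num) (by omega)
        omega
      simp only [Finset.mem_biUnion, Finset.mem_range, Finset.mem_filter, Finset.mem_Ico]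
      exact ⟨i, by omega, ⟨hle, hlt⟩, hv⟩
    calc ((Finset.Ico 1 (2*2^s)).filter (fun k => visited (2^s) l r k)).card
        ≤ ((Finset.range (s+1)).biUnion
            (fun i => (Finset.Ico (2^i) (2^(i+1))).filter (fun k => visited (2^s) l r k))).card :=
          Finset.card_le_card hdecomp
      _ ≤ ∑ i ∈ Finset.range (s+1),
            ((Finset.Ico (2^i) (2^(i+1))).filter (fun k => visited (2^s) l r k)).card :=
          Finset.card_biUnion_le
      _ ≤ ∑ i ∈ Finset.range (s+1), 4 :=
          Finset.sum_le_sum (fun i hi => key i (Nat.lt_succ_iff.mp (Finset.mem_range.mp hi)))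
      _ ≤ 4 * (s+1) := by simp [Finset.sum_const, Finset.card_range, Nat.mul_comm]
end

section
/- After ℓ iterations of the procedure 'query the index i of the global minimum (smallest index in case of ties), then set a[i] := ⊤', the minimum index returned at iteration ℓ+1 is the index of the (ℓ+1)-th smallest element of the original array, where elements are ranked by the lexicographic order on (value, index). -/
theorem rmq_iteration_next_smallest {A : Type*} [LinearOrder A] [OrderTop A]
    (n ℓ : ℕ) (hℓ : ℓ + 1 ≤ n) (a : Fin n → A) (ha : ∀ i, a i < ⊤)
    (b : ℕ → Fin n → A) (seq : ℕ → Fin n)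
    (hb0 : b 0 = a)
    -- at each of the first `ℓ + 1` iterations, `seq j` is the smallest index
    -- achieving the global minimum of the current array (lexicographic minimum)
    (hsel : ∀ j, j ≤ ℓ → ∀ i : Fin n,
      b j (seq j) < b j i ∨ (b j (seq j) = b j i ∧ seq j ≤ i))
    -- updating sets the returned position to `⊤`
    (hstep : ∀ j, j ≤ ℓ → b (j + 1) = Function.update (b j) (seq j) ⊤) :
    -- the index returned at iteration `ℓ + 1` is the index of the `(ℓ+1)`-th
    -- smallest element of the original array (ranked lexicographically by
    -- `(value, index)`): exactly `ℓ` indices are strictly smaller in this order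
    (Finset.univ.filter (fun i : Fin n =>
      a i < a (seq ℓ) ∨ (a i = a (seq ℓ) ∧ i < seq ℓ))).card = ℓ := by
  -- untouched indices keep their original value
  have hbval : ∀ j, j ≤ ℓ → ∀ i : Fin n, (∀ k, k < j → seq k ≠ i) → b j i = a i := by
    intro j
    induction j with
    | zero => intro _ i _; rw [hb0]
    | succ j ih =>
      intro hj i hi
      rw [hstep j (Nat.le_of_succ_le hj),
        Function.update_of_ne (Ne.symm (hi j (Nat.lt_succ_self j)))]
      exact ih (Nat.le_of_succ_le hj) i (fun k hk => hi k (hk.trans (Nat.lt_succ_self j)))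
  -- touched indices are ⊤
  have hbtop : ∀ j, j ≤ ℓ → ∀ k, k < j → b j (seq k) = ⊤ := by
    intro j
    induction j with
    | zero => intro _ k hk; exact absurd hk (Nat.not_lt_zero k)
    | succ j ih =>
      intro hj k hk
      rw [hstep j (Nat.le_of_succ_le hj)]
      rcases Nat.lt_succ_iff_lt_or_eq.mp hk with hk' | rfl
      · by_cases h : seq k = seq j
        · rw [h, Function.update_self]
        · rw [Function.update_of_ne h]
          exact ih (Nat.le_of_succ_le hj) k hk'
      · rw [Function.update_self]
  -- the current minimum is below ⊤
  have hlt : ∀ j, j ≤ ℓ → b j (seq j) < ⊤ := by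
    intro j hj
    by_contra h
    have htop : b j (seq j) = ⊤ := top_le_iff.mp (not_lt.mp h)
    have hall : ∀ i : Fin n, b j i = ⊤ := by
      intro i
      rcases hsel j hj i with h' | ⟨h', _⟩
      · exact absurd (htop ▸ h') (not_lt.mpr le_top)
      · exact h' ▸ htop
    have hsub : (Finset.univ : Finset (Fin n)) ⊆ (Finset.range j).image seq := by
      intro i _
      by_contra hc
      simp only [Finset.mem_image, Finset.mem_range, not_exists, not_and] at hc
      have := hbval j hj i (fun k hk he => hc k hk he)
      exact absurd (this ▸ hall i) (ne_of_lt (ha i))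
    have : n ≤ j := by
      calc n = (Finset.univ : Finset (Fin n)).card := by simp
        _ ≤ ((Finset.range j).image seq).card := Finset.card_le_card hsub
        _ ≤ (Finset.range j).card := Finset.card_image_le
        _ = j := Finset.card_range j
    omega
  -- distinctness
  have hne : ∀ k j, k < j → j ≤ ℓ → seq k ≠ seq j := by
    intro k j hk hj he
    have := hbtop j hj k hk
    rw [he] at this
    exact absurd this (ne_of_lt (hlt j hj))
  have hset : Finset.univ.filter (fun i : Fin n =>
      a i < a (seq ℓ) ∨ (a i = a (seq ℓ) ∧ i < seq ℓ)) = (Finset.range ℓ).image seq := by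
    ext i
    simp only [Finset.mem_filter, Finset.mem_image, Finset.mem_range, Finset.mem_univ, true_and]
    constructor
    · intro hi
      by_contra hc
      push_neg at hc
      have hbi : b ℓ i = a i := hbval ℓ le_rfl i (fun k hk => hc k hk)
      have hbs : b ℓ (seq ℓ) = a (seq ℓ) :=
        hbval ℓ le_rfl _ (fun k hk h => hne k ℓ hk le_rfl h)
      rcases hsel ℓ le_rfl i with h | ⟨h, h2⟩
      · rw [hbi, hbs] at h
        rcases hi with h1 | ⟨h1, _⟩
        · exact absurd h1 (not_lt.mpr h.le)
        · exact absurd (h1 ▸ h) (lt_irrefl _)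
      · rw [hbi, hbs] at h
        rcases hi with h1 | ⟨_, h2'⟩
        · exact absurd h1 (not_lt.mpr h.le)
        · exact absurd h2' (not_lt.mpr h2)
    · rintro ⟨k, hk, rfl⟩
      have hk' : k ≤ ℓ := hk.le
      have hbs : b k (seq k) = a (seq k) :=
        hbval k hk' _ (fun m hm h => hne m k hm hk' h)
      have hbl : b k (seq ℓ) = a (seq ℓ) :=
        hbval k hk' _ (fun m hm h => hne m ℓ (hm.trans hk) le_rfl h)
      have hne' : seq k ≠ seq ℓ := hne k ℓ hk le_rfl
      rcases hsel k hk' (seq ℓ) with h | ⟨h, h2⟩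
      · left; rw [hbs, hbl] at h; exact h
      · right
        rw [hbs, hbl] at h
        exact ⟨h, lt_of_le_of_ne h2 hne'⟩
  rw [hset, Finset.card_image_of_injOn, Finset.card_range]
  intro x hx y hy hxy
  simp only [Finset.coe_range, Set.mem_Iio] at hx hy
  rcases lt_trichotomy x y with h | h | h
  · exact absurd hxy (hne x y h hy.le)
  · exact h
  · exact absurd hxy.symm (hne y x h hx.le)
end

section
/- In the segment tree on n = 2^s elements, for any interval [l, r] ⊆ [1, n], there exists a set S of at most 2(s+1) nodes whose ranges are pairwise disjoint and whose union is exactly [l, r] (the canonical decomposition of [l, r] into segment tree nodes); moreover, the minimum of a over [l, r] equals the minimum over the nodes in S of the range minima stored at those nodes. -/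
open Finset

lemma segL_left (n k : ℕ) (hk : 1 ≤ k) : segL n (2*k) = segL n k := by
  obtain ⟨j, rfl⟩ : ∃ j, k = j + 1 := ⟨k-1, by omega⟩
  have h : 2*(j+1) = (2*j) + 2 := by ring
  rw [segL, h, segRange]
  have h2 : (2*j+2)/2 = j + 1 := by omega
  simp [h2, Nat.mul_add_mod]
  rfl

lemma segR_left (n k : ℕ) (hk : 1 ≤ k) : segR n (2*k) = (segL n k + segR n k)/2 := by
  obtain ⟨j, rfl⟩ : ∃ j, k = j + 1 := ⟨k-1, by omega⟩
  have h : 2*(j+1) = (2*j) + 2 := by ring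
  rw [segR, h, segRange]
  have h2 : (2*j+2)/2 = j + 1 := by omega
  simp [h2, Nat.mul_add_mod]
  rfl

lemma segL_right (n k : ℕ) (hk : 1 ≤ k) : segL n (2*k+1) = (segL n k + segR n k)/2 + 1 := by
  obtain ⟨j, rfl⟩ : ∃ j, k = j + 1 := ⟨k-1, by omega⟩
  have h : 2*(j+1)+1 = (2*j+1) + 2 := by ring
  rw [segL, h, segRange]
  have h2 : (2*j+1+2)/2 = j + 1 := by omega
  have h3 : (2*j+1+2) % 2 = 1 := by omega
  simp [h2, h3]
  rfl

lemma segR_right (n k : ℕ) (hk : 1 ≤ k) : segR n (2*k+1) = segR n k := by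
  obtain ⟨j, rfl⟩ : ∃ j, k = j + 1 := ⟨k-1, by omega⟩
  have h : 2*(j+1)+1 = (2*j+1) + 2 := by ring
  rw [segR, h, segRange]
  have h2 : (2*j+1+2)/2 = j + 1 := by omega
  have h3 : (2*j+1+2) % 2 = 1 := by omega
  simp [h2, h3]
  rfl

def qry (n l r : ℕ) : ℕ → ℕ → Finset ℕ
  | 0, k => if l ≤ segL n k ∧ segR n k ≤ r then {k} else ∅
  | (f+1), k =>
    if l ≤ segL n k ∧ segR n k ≤ r then {k}
    else if r < segL n k ∨ segR n k < l then ∅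
    else qry n l r f (2*k) ∪ qry n l r f (2*k+1)

lemma qry_contained (n l r f k : ℕ) (h1 : l ≤ segL n k) (h2 : segR n k ≤ r) :
    qry n l r f k = {k} := by
  cases f <;> simp [qry, h1, h2]

lemma qry_empty (n l r f k : ℕ) (h0 : segL n k ≤ segR n k)
    (hd : r < segL n k ∨ segR n k < l) : qry n l r f k = ∅ := by
  cases f <;> · rw [qry]; split_ifs <;> first | rfl | omega

lemma biUnion_union' {α β : Type*} [DecidableEq α] [DecidableEq β] (s t : Finset α)
    (f : α → Finset β) : (s ∪ t).biUnion f = s.biUnion f ∪ t.biUnion f := by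
  ext x; simp [or_and_right, exists_or]

lemma qry_struct (n l r : ℕ) : ∀ f k, 1 ≤ k → 1 ≤ segL n k →
    segR n k + 1 = segL n k + 2^f →
    (∀ j ∈ qry n l r f k, segL n k ≤ segL n j ∧ segL n j ≤ segR n j ∧ segR n j ≤ segR n k) ∧
    (∀ j ∈ qry n l r f k, ∀ j' ∈ qry n l r f k, j ≠ j' →
      Disjoint (Icc (segL n j) (segR n j)) (Icc (segL n j') (segR n j'))) ∧
    (qry n l r f k).biUnion (fun j => Icc (segL n j) (segR n j)) =
      Icc (segL n k) (segR n k) ∩ Icc l r := by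
  intro f
  induction f with
  | zero =>
    intro k hk hL hlen
    have hLR : segL n k = segR n k := by simpa using hlen.symm
    rw [qry]
    split_ifs with h
    · refine ⟨by simp; omega, by simp, ?_⟩
      ext x; simp; omega
    · refine ⟨by simp, by simp, ?_⟩
      ext x; simp; omega
  | succ f ih =>
    intro k hk hL hlen
    have h2f : 1 ≤ 2^f := Nat.one_le_two_pow
    have hpow : 2^(f+1) = 2*2^f := by ring
    rw [hpow] at hlen
    rw [qry]
    split_ifs with h1 h2
    · refine ⟨by simp; omega, by simp, ?_⟩
      ext x; simp; omega
    · refine ⟨by simp, by simp, ?_⟩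
      ext x; simp; omega
    · -- recursive case
      have hLl := segL_left n k hk
      have hRl := segR_left n k hk
      have hLr := segL_right n k hk
      have hRr := segR_right n k hk
      have hm : (segL n k + segR n k)/2 + 1 = segL n k + 2^f := by omega
      obtain ⟨cl, dl, ul⟩ := ih (2*k) (by omega) (by omega) (by omega)
      obtain ⟨cr, dr, ur⟩ := ih (2*k+1) (by omega) (by omega) (by omega)
      refine ⟨?_, ?_, ?_⟩
      · intro j hj
        rcases Finset.mem_union.mp hj with hj | hj
        · have := cl j hj; omega
        · have := cr j hj; omega
      · intro j hj j' hj' hne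
        rcases Finset.mem_union.mp hj with hj | hj <;>
          rcases Finset.mem_union.mp hj' with hj' | hj'
        · exact dl j hj j' hj' hne
        · have a1 := cl j hj; have a2 := cr j' hj'
          rw [Finset.disjoint_left]; intro x hx hx'; simp at hx hx'; omega
        · have a1 := cr j hj; have a2 := cl j' hj'
          rw [Finset.disjoint_left]; intro x hx hx'; simp at hx hx'; omega
        · exact dr j hj j' hj' hne
      · rw [biUnion_union', ul, ur]
        ext x; simp; omega

lemma qry_card_prefix (n l r : ℕ) : ∀ f k, 1 ≤ k → 1 ≤ segL n k →
    segR n k + 1 = segL n k + 2^f → l ≤ segL n k → (qry n l r f k).card ≤ f + 1 := by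
  intro f
  induction f with
  | zero => intro k hk hL hlen hpre; rw [qry]; split_ifs <;> simp
  | succ f ih =>
    intro k hk hL hlen hpre
    have h2f : 1 ≤ 2^f := Nat.one_le_two_pow
    have hpow : 2^(f+1) = 2*2^f := by ring
    rw [hpow] at hlen
    rw [qry]
    split_ifs with h1 h2
    · simp
    · simp
    · have hLl := segL_left n k hk
      have hRl := segR_left n k hk
      have hLr := segL_right n k hk
      have hRr := segR_right n k hk
      refine le_trans (Finset.card_union_le _ _) ?_
      by_cases hr : r ≤ (segL n k + segR n k)/2
      · have he : qry n l r f (2*k+1) = ∅ :=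
          qry_empty n l r f (2*k+1) (by omega) (by omega)
        have := ih (2*k) (by omega) (by omega) (by omega) (by omega)
        rw [he]; simp; omega
      · have hc : qry n l r f (2*k) = {2*k} :=
          qry_contained n l r f (2*k) (by omega) (by omega)
        have := ih (2*k+1) (by omega) (by omega) (by omega) (by omega)
        rw [hc]; simp; omega

lemma qry_card_suffix (n l r : ℕ) : ∀ f k, 1 ≤ k → 1 ≤ segL n k →
    segR n k + 1 = segL n k + 2^f → segR n k ≤ r → (qry n l r f k).card ≤ f + 1 := by
  intro f
  induction f with
  | zero => intro k hk hL hlen hsuf; rw [qry]; split_ifs <;> simp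
  | succ f ih =>
    intro k hk hL hlen hsuf
    have h2f : 1 ≤ 2^f := Nat.one_le_two_pow
    have hpow : 2^(f+1) = 2*2^f := by ring
    rw [hpow] at hlen
    rw [qry]
    split_ifs with h1 h2
    · simp
    · simp
    · have hLl := segL_left n k hk
      have hRl := segR_left n k hk
      have hLr := segL_right n k hk
      have hRr := segR_right n k hk
      refine le_trans (Finset.card_union_le _ _) ?_
      by_cases hl2 : (segL n k + segR n k)/2 < l
      · have he : qry n l r f (2*k) = ∅ :=
          qry_empty n l r f (2*k) (by omega) (by omega)
        have := ih (2*k+1) (by omega) (by omega) (by omega) (by omega)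
        rw [he]; simp; omega
      · have hc : qry n l r f (2*k+1) = {2*k+1} :=
          qry_contained n l r f (2*k+1) (by omega) (by omega)
        have := ih (2*k) (by omega) (by omega) (by omega) (by omega)
        rw [hc]; simp; omega

lemma qry_card (n l r : ℕ) : ∀ f k, 1 ≤ k → 1 ≤ segL n k →
    segR n k + 1 = segL n k + 2^f → (qry n l r f k).card ≤ 2*f + 2 := by
  intro f
  induction f with
  | zero => intro k hk hL hlen; rw [qry]; split_ifs <;> simp
  | succ f ih =>
    intro k hk hL hlen
    have h2f : 1 ≤ 2^f := Nat.one_le_two_pow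
    have hpow : 2^(f+1) = 2*2^f := by ring
    rw [hpow] at hlen
    rw [qry]
    split_ifs with h1 h2
    · simp
    · simp
    · have hLl := segL_left n k hk
      have hRl := segR_left n k hk
      have hLr := segL_right n k hk
      have hRr := segR_right n k hk
      refine le_trans (Finset.card_union_le _ _) ?_
      by_cases hr : r ≤ (segL n k + segR n k)/2
      · have he : qry n l r f (2*k+1) = ∅ :=
          qry_empty n l r f (2*k+1) (by omega) (by omega)
        have := ih (2*k) (by omega) (by omega) (by omega)
        rw [he]; simp; omega
      · by_cases hl2 : (segL n k + segR n k)/2 < l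
        · have he : qry n l r f (2*k) = ∅ :=
            qry_empty n l r f (2*k) (by omega) (by omega)
          have := ih (2*k+1) (by omega) (by omega) (by omega)
          rw [he]; simp; omega
        · have hL2 := qry_card_suffix n l r f (2*k) (by omega) (by omega) (by omega) (by omega)
          have hR2 := qry_card_prefix n l r f (2*k+1) (by omega) (by omega) (by omega) (by omega)
          omega


theorem segTree_canonical_decomposition {A : Type*} [LinearOrder A]
    (s n l r : ℕ) (hs : 1 ≤ s) (hn : n = 2 ^ s)
    (hl : 1 ≤ l) (hlr : l ≤ r) (hr : r ≤ n) (a : ℕ → A) :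
    ∃ S : Finset ℕ,
      S.card ≤ 2 * (s + 1) ∧
      (∀ k ∈ S, ∀ k' ∈ S, k ≠ k' →
        Disjoint (Finset.Icc (segL n k) (segR n k)) (Finset.Icc (segL n k') (segR n k'))) ∧
      S.biUnion (fun k => Finset.Icc (segL n k) (segR n k)) = Finset.Icc l r ∧
      (Finset.Icc l r).inf (fun i => (a i : WithTop A)) =
        S.inf (fun k => (Finset.Icc (segL n k) (segR n k)).inf (fun i => (a i : WithTop A))) := by
  subst hn
  have hL1 : segL (2^s) 1 = 1 := by simp [segL, segRange]
  have hR1 : segR (2^s) 1 = 2^s := by simp [segR, segRange]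
  have h2s : 1 ≤ 2^s := Nat.one_le_two_pow
  have hlen : segR (2^s) 1 + 1 = segL (2^s) 1 + 2^s := by rw [hL1, hR1]; omega
  obtain ⟨hcont, hdisj, hunion⟩ := qry_struct (2^s) l r s 1 le_rfl (by rw [hL1]) hlen
  have hcard := qry_card (2^s) l r s 1 le_rfl (by rw [hL1]) hlen
  have hU : (qry (2^s) l r s 1).biUnion (fun k => Finset.Icc (segL (2^s) k) (segR (2^s) k)) =
      Finset.Icc l r := by
    rw [hunion, hL1, hR1]; ext x; simp; omega
  refine ⟨qry (2^s) l r s 1, by omega, hdisj, hU, ?_⟩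
  rw [← hU, Finset.inf_biUnion]
end
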